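/- Single-swap inequality for a pure cluster of a locally optimal solution: let ε ∈ (0, 1/12], let S ⊆ F be nonempty, c' ∈ S, c* ∈ F, and let σ_S be an assignment for S. Let C' := σ_S⁻¹(c'), and let C* ⊆ D satisfy C* ∩ C' ≠ ∅ and |C' − C*| ≤ 4ε·|C* ∩ C'|. If cost((S − {c'}) ∪ {c*}) ≥ cost(S), then Σ_{p∈C*∩C'} d(p,S) ≤ Σ_{p∈C*∩C'} ( (1+4ε)·d(p,c*) + 4ε·d(p,S) ). -/
import Mathlib


open Finset

/-- `d(p,S)`: distance from `p` to the closest point of `S` (junk `0` if `S = ∅`). -/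
noncomputable def dS {X : Type*} [MetricSpace X] (p : X) (S : Finset X) : ℝ :=
  if h : S.Nonempty then S.inf' h (fun c => dist p c) else 0

/-- `cost(S) = Σ_{p∈D} d(p,S)`. -/
noncomputable def kmCost {X : Type*} [MetricSpace X] (D S : Finset X) : ℝ :=
  ∑ p ∈ D, dS p S

/-- The cluster of center `c` under assignment `σ`. -/
def cluster {X : Type*} [DecidableEq X] (D : Finset X) (σ : X → X) (c : X) : Finset X :=
  D.filter (fun p => σ p = c)

lemma dS_le_dist {X : Type*} [MetricSpace X] (p c : X) {T : Finset X} (hc : c ∈ T) :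
    dS p T ≤ dist p c := by
  rw [dS, dif_pos ⟨c, hc⟩]
  exact inf'_le _ hc

/-- Single-swap inequality for a pure cluster of a locally optimal solution: if
`C' = σS⁻¹(c')`, `C* ∩ C' ≠ ∅`, `|C' − C*| ≤ 4ε·|C* ∩ C'|`, and swapping `c'` for `c*`
does not decrease the cost, then
`Σ_{p∈C*∩C'} d(p,S) ≤ Σ_{p∈C*∩C'} ((1+4ε)·d(p,c*) + 4ε·d(p,S))`. -/
theorem pure_cluster_swap_inequality {X : Type*} [MetricSpace X] [DecidableEq X]
    (D F S : Finset X) (hD : D.Nonempty) (hSne : S.Nonempty) (hSF : S ⊆ F)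
    (ε : ℝ) (hε0 : 0 < ε) (hε1 : ε ≤ 1 / 12)
    (c' : X) (hc' : c' ∈ S) (cstar : X) (hcstar : cstar ∈ F)
    (σS : X → X) (hσS : ∀ p ∈ D, σS p ∈ S ∧ dist p (σS p) = dS p S)
    (Cstar : Finset X) (hCstarD : Cstar ⊆ D)
    (hne : (Cstar ∩ cluster D σS c').Nonempty)
    (hsmall : (((cluster D σS c' \ Cstar)).card : ℝ)
      ≤ 4 * ε * ((Cstar ∩ cluster D σS c').card : ℝ))
    (hlocal : kmCost D S ≤ kmCost D (insert cstar (S.erase c'))) :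
    ∑ p ∈ Cstar ∩ cluster D σS c', dS p S
      ≤ ∑ p ∈ Cstar ∩ cluster D σS c',
          ((1 + 4 * ε) * dist p cstar + 4 * ε * dS p S) := by
  set C' := cluster D σS c' with hC'def
  set I := Cstar ∩ C' with hIdef
  set S' := insert cstar (S.erase c') with hS'def
  have hC'D : C' ⊆ D := filter_subset _ _
  have hIC' : I ⊆ C' := inter_subset_right
  have hdSeq : ∀ p ∈ D, dS p S = dist p (σS p) := fun p hp => ((hσS p hp).2).symm
  have hdC' : ∀ p ∈ C', dS p S = dist p c' := by
    intro p hp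
    have hpD := hC'D hp
    have hσ : σS p = c' := (mem_filter.mp hp).2
    rw [hdSeq p hpD, hσ]
  obtain ⟨q0, hq0I, hq0min⟩ :=
    exists_min_image I (fun q => dist q c' + dist q cstar) hne
  -- bounds on distances to the swapped set S'
  have hb1 : ∀ p ∈ D \ C', dS p S' ≤ dS p S := by
    intro p hp
    obtain ⟨hpD, hpC⟩ := mem_sdiff.mp hp
    have h1 : σS p ≠ c' := fun h => hpC (mem_filter.mpr ⟨hpD, h⟩)
    have h2 : σS p ∈ S' := mem_insert_of_mem (mem_erase.mpr ⟨h1, (hσS p hpD).1⟩)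
    calc dS p S' ≤ dist p (σS p) := dS_le_dist p _ h2
      _ = dS p S := (hdSeq p hpD).symm
  have hb2 : ∀ p ∈ I, dS p S' ≤ dist p cstar := fun p _ =>
    dS_le_dist p cstar (mem_insert_self _ _)
  have hb3 : ∀ p ∈ C' \ Cstar, dS p S' ≤ dS p S + (dist q0 c' + dist q0 cstar) := by
    intro p hp
    have hpC' : p ∈ C' := (mem_sdiff.mp hp).1
    calc dS p S' ≤ dist p cstar := dS_le_dist p cstar (mem_insert_self _ _)
      _ ≤ dist p c' + dist c' cstar := dist_triangle _ _ _
      _ ≤ dist p c' + (dist c' q0 + dist q0 cstar) := by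
            gcongr
            exact dist_triangle _ _ _
      _ = dS p S + (dist q0 c' + dist q0 cstar) := by
            rw [hdC' p hpC', dist_comm c' q0]
  -- splitting sums over D
  have hC'I : C' \ I = C' \ Cstar := by
    ext x; simp only [hIdef, mem_sdiff, mem_inter]; tauto
  have hsplit : ∀ (f : X → ℝ), ∑ p ∈ D, f p
      = ∑ p ∈ D \ C', f p + (∑ p ∈ C' \ Cstar, f p + ∑ p ∈ I, f p) := by
    intro f
    rw [← sum_sdiff hC'D, ← sum_sdiff hIC', hC'I]
  have hlocal' : ∑ p ∈ D \ C', dS p S + (∑ p ∈ C' \ Cstar, dS p S + ∑ p ∈ I, dS p S)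
      ≤ ∑ p ∈ D \ C', dS p S' + (∑ p ∈ C' \ Cstar, dS p S' + ∑ p ∈ I, dS p S') := by
    have := hlocal
    rw [kmCost, kmCost, hsplit (fun p => dS p S), hsplit (fun p => dS p S')] at this
    exact this
  have hkey : ∑ p ∈ I, dS p S
      ≤ (((C' \ Cstar).card : ℝ)) * (dist q0 c' + dist q0 cstar)
        + ∑ p ∈ I, dist p cstar := by
    have h1 : ∑ p ∈ D \ C', dS p S' ≤ ∑ p ∈ D \ C', dS p S := sum_le_sum hb1
    have h2 : ∑ p ∈ I, dS p S' ≤ ∑ p ∈ I, dist p cstar := sum_le_sum hb2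
    have h3 : ∑ p ∈ C' \ Cstar, dS p S'
        ≤ ∑ p ∈ C' \ Cstar, dS p S
          + (((C' \ Cstar).card : ℝ)) * (dist q0 c' + dist q0 cstar) := by
      calc ∑ p ∈ C' \ Cstar, dS p S'
          ≤ ∑ p ∈ C' \ Cstar, (dS p S + (dist q0 c' + dist q0 cstar)) := sum_le_sum hb3
        _ = _ := by rw [sum_add_distrib, sum_const, nsmul_eq_mul]
    linarith
  -- bound the cardinality term
  have hf0 : (0:ℝ) ≤ dist q0 c' + dist q0 cstar := by positivity
  have hcard : (((C' \ Cstar).card : ℝ)) * (dist q0 c' + dist q0 cstar)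
      ≤ 4 * ε * ((I.card : ℝ) * (dist q0 c' + dist q0 cstar)) := by
    rw [← mul_assoc]
    exact mul_le_mul_of_nonneg_right hsmall hf0
  have havg : (I.card : ℝ) * (dist q0 c' + dist q0 cstar)
      ≤ ∑ q ∈ I, (dist q c' + dist q cstar) := by
    calc (I.card : ℝ) * (dist q0 c' + dist q0 cstar)
        = ∑ _q ∈ I, (dist q0 c' + dist q0 cstar) := by rw [sum_const, nsmul_eq_mul]
      _ ≤ ∑ q ∈ I, (dist q c' + dist q cstar) := sum_le_sum hq0min
  have hε4 : (0:ℝ) ≤ 4 * ε := by linarith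
  have hfinal : ∑ p ∈ I, dS p S
      ≤ ∑ p ∈ I, dist p cstar + 4 * ε * ∑ q ∈ I, (dist q c' + dist q cstar) := by
    have := mul_le_mul_of_nonneg_left havg hε4
    linarith [hkey, hcard]
  calc ∑ p ∈ I, dS p S
      ≤ ∑ p ∈ I, dist p cstar + 4 * ε * ∑ q ∈ I, (dist q c' + dist q cstar) := hfinal
    _ = ∑ p ∈ I, ((1 + 4 * ε) * dist p cstar + 4 * ε * dS p S) := by
        rw [mul_sum, ← sum_add_distrib]
        refine sum_congr rfl fun p hp => ?_
        rw [hdC' p (hIC' hp)]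
        ring
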